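/- arXiv:1401.3161 — 2 statements merged into one kernel-verified Lean document; each statement's English description precedes it below -/
import Mathlib

section
/- For |q| < 1 and |b| < 1 in ℝ (or ℂ), the reciprocal of the infinite product ∏_{i=0}^{n-1}(1 - q^i b) equals the convergent series ∑_{i=0}^{∞} (n+i-1 choose i)_q · b^i. -/
/-!
Write `F_n(b) = ∑ᵢ (n+i-1 choose i)_q bⁱ`. The `q`-Pascal rule in the form
`(m+1 choose k+1)_q = (m choose k+1)_q + q^(m-k) (m choose k)_q` says, coefficientwise,
that `(1 - qⁿ b) F_{n+1}(b) = F_n(b)`; since `F_0 = 1`, induction gives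
`F_n = ∏_{i<n} (1 - qⁱ b)⁻¹`.
Convergence comes from the bound `‖(m choose k)_q‖ ≤ (m choose k)` for `‖q‖ ≤ 1`, which
dominates `F_{n+1}(b)` by the binomial series `∑ᵢ (n+i choose n) ‖b‖ⁱ`.
-/

/-- The Gaussian binomial coefficient `(n choose k)_q`, defined by the
`q`-Pascal recursion. -/
def gaussBinom {R : Type*} [CommRing R] (q : R) : ℕ → ℕ → R
  | _, 0 => 1
  | 0, _ + 1 => 0
  | n + 1, k + 1 => gaussBinom q n (k + 1) * q ^ (k + 1) + gaussBinom q n k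

section Identities

variable {R : Type*} [CommRing R] (q : R)

@[simp]
theorem gaussBinom_zero_right (m : ℕ) : gaussBinom q m 0 = 1 := by
  cases m <;> rfl

theorem gaussBinom_succ_succ (m k : ℕ) :
    gaussBinom q (m + 1) (k + 1) = gaussBinom q m (k + 1) * q ^ (k + 1) + gaussBinom q m k :=
  rfl

theorem gaussBinom_eq_zero_of_lt {m k : ℕ} (h : m < k) : gaussBinom q m k = 0 := by
  induction m generalizing k with
  | zero => obtain ⟨k, rfl⟩ := Nat.exists_eq_succ_of_ne_zero h.ne'; rfl
  | succ m ih =>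
    obtain ⟨k, rfl⟩ := Nat.exists_eq_succ_of_ne_zero (by omega : k ≠ 0)
    rw [gaussBinom_succ_succ, ih (by omega), ih (by omega), zero_mul, add_zero]

/-- The ratio formula `(m choose k+1)_q = (q^(m-k) - 1) / (q^(k+1) - 1) · (m choose k)_q`,
cleared of denominators. -/
theorem sub_one_mul_gaussBinom_succ (k d : ℕ) :
    (q ^ (k + 1) - 1) * gaussBinom q (k + d) (k + 1) =
      (q ^ d - 1) * gaussBinom q (k + d) k := by
  induction k generalizing d with
  | zero =>
    induction d with
    | zero => simp [gaussBinom_eq_zero_of_lt]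
    | succ d ih =>
      simp only [zero_add, gaussBinom_zero_right, mul_one] at ih ⊢
      rw [gaussBinom_succ_succ, gaussBinom_zero_right]
      linear_combination q * ih
  | succ k ihk =>
    induction d with
    | zero => simp [gaussBinom_eq_zero_of_lt]
    | succ d ihd =>
      have h := ihk (d + 1)
      rw [show k + (d + 1) = k + 1 + d by omega] at h
      rw [show k + 1 + (d + 1) = k + 1 + d + 1 by omega, gaussBinom_succ_succ,
        gaussBinom_succ_succ]
      linear_combination q ^ (k + 2) * ihd + h

theorem gaussBinom_succ_succ' (k d : ℕ) :
    gaussBinom q (k + d + 1) (k + 1) =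
      gaussBinom q (k + d) (k + 1) + q ^ d * gaussBinom q (k + d) k := by
  linear_combination gaussBinom_succ_succ q (k + d) k + sub_one_mul_gaussBinom_succ q k d

end Identities

theorem norm_gaussBinom_le_choose {R : Type*} [NormedCommRing R] [NormOneClass R] {q : R}
    (hq : ‖q‖ ≤ 1) (m k : ℕ) : ‖gaussBinom q m k‖ ≤ m.choose k := by
  induction m generalizing k with
  | zero => cases k <;> simp [gaussBinom_eq_zero_of_lt]
  | succ m ih =>
    cases k with
    | zero => simp
    | succ k =>
      have hpow : ‖q ^ (k + 1)‖ ≤ 1 :=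
        (norm_pow_le q _).trans (pow_le_one₀ (norm_nonneg q) hq)
      calc ‖gaussBinom q (m + 1) (k + 1)‖
          ≤ ‖gaussBinom q m (k + 1)‖ * ‖q ^ (k + 1)‖ + ‖gaussBinom q m k‖ :=
            (norm_add_le _ _).trans (by gcongr; exact norm_mul_le _ _)
        _ ≤ m.choose (k + 1) * 1 + m.choose k := by
            gcongr
            · exact ih (k + 1)
            · exact ih k
        _ = (m + 1).choose (k + 1) := by
            rw [mul_one, Nat.choose_succ_succ', Nat.cast_add, add_comm]

theorem summable_gaussBinom_mul_pow {𝕜 : Type*} [NormedField 𝕜] [CompleteSpace 𝕜]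
    {q b : 𝕜} (hq : ‖q‖ ≤ 1) (hb : ‖b‖ < 1) (n : ℕ) :
    Summable fun i => gaussBinom q (n + i) i * b ^ i := by
  have hb' : ‖‖b‖‖ < 1 := by rwa [norm_norm]
  refine (summable_choose_mul_geometric_of_norm_lt_one n hb').of_norm_bounded fun i => ?_
  rw [norm_mul, norm_pow, add_comm n i, ← Nat.choose_symm_add]
  gcongr
  exact norm_gaussBinom_le_choose hq _ _

theorem hasSum_of_succ_eq_add_mul {K : Type*} [Field K] [TopologicalSpace K]
    [IsTopologicalRing K] [T2Space K] {u v : ℕ → K} {a t : K} (ha : a ≠ 1) (hu : Summable u)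
    (hv : HasSum v t) (h0 : u 0 = v 0) (hsucc : ∀ i, u (i + 1) = v (i + 1) + a * u i) :
    HasSum u (t * (1 - a)⁻¹) := by
  obtain ⟨s, hs⟩ := hu
  have hu_shift : HasSum (fun i => u (i + 1)) (s - u 0) := by
    simpa using (hasSum_nat_add_iff' 1).mpr hs
  have hv_shift : HasSum (fun i => v (i + 1) + a * u i) (t - v 0 + a * s) := by
    simpa using ((hasSum_nat_add_iff' 1).mpr hv).add (hs.mul_left a)
  have hs_eq : s - u 0 = t - v 0 + a * s :=
    hu_shift.unique (by simpa only [← hsucc] using hv_shift)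
  have h1a : 1 - a ≠ 0 := sub_ne_zero.mpr ha.symm
  convert hs using 1
  field_simp
  linear_combination -hs_eq - h0

theorem inv_q_product_eq_tsum (q b : ℂ) (hq : ‖q‖ < 1) (hb : ‖b‖ < 1) (n : ℕ) :
    HasSum (fun i : ℕ => gaussBinom q (n + i - 1) i * b ^ i)
      (∏ i ∈ Finset.range n, (1 - q ^ i * b))⁻¹ := by
  induction n with
  | zero =>
    convert hasSum_single (f := fun i : ℕ => gaussBinom q (0 + i - 1) i * b ^ i) 0 fun i hi => ?_
    · simp
    · obtain ⟨i, rfl⟩ := Nat.exists_eq_succ_of_ne_zero hi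
      simp [gaussBinom_eq_zero_of_lt]
  | succ n ih =>
    have hqb : q ^ n * b ≠ 1 := by
      refine ne_of_apply_ne norm (ne_of_lt ?_)
      rw [norm_mul, norm_pow, norm_one]
      exact (mul_le_of_le_one_left (norm_nonneg b)
        (pow_le_one₀ (norm_nonneg q) hq.le)).trans_lt hb
    rw [Finset.prod_range_succ, mul_inv]
    refine hasSum_of_succ_eq_add_mul hqb ?_ ih (by simp) fun i => ?_
    · simpa [add_right_comm] using summable_gaussBinom_mul_pow hq.le hb n
    · simp only [show n + 1 + (i + 1) - 1 = i + n + 1 by omega,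
        show n + (i + 1) - 1 = i + n by omega, show n + 1 + i - 1 = i + n by omega,
        gaussBinom_succ_succ']
      ring
end

section
/- Second symmetry identity (Theorem 4): for n ≥ 0, odd w₁, w₂ ∈ ℕ, r ≥ 1, h ∈ ℤ, 0 < q < 1, real x: ∑_{i=0}^{n} (n choose i) [w₂]_q^i [w₁]_q^{n−i} E_{n−i,q^{w₁}}^{(h,r)}(w₂x) T_{n,i,q^{w₂}}^{(h,r)}(w₁) = ∑_{i=0}^{n} (n choose i) [w₁]_q^i [w₂]_q^{n−i} E_{n−i,q^{w₂}}^{(h,r)}(w₁x) T_{n,i,q^{w₁}}^{(h,r)}(w₂). -/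
/-- The `q`-number `[z]_q = (1 - q^z)/(1 - q)` for real `z`. -/
noncomputable def qNum (q z : ℝ) : ℝ := (1 - q ^ z) / (1 - q)

/-- The `q`-Euler polynomial of order `r`. -/
noncomputable def qEuler (q : ℝ) (h : ℤ) (r n : ℕ) (y : ℝ) : ℝ :=
  2 ^ r * ∑' m : Fin r → ℕ,
    q ^ (∑ l : Fin r, ((h : ℝ) - (l.1 + 1)) * (m l : ℝ)) *
      (-1 : ℝ) ^ (∑ l : Fin r, m l) * qNum q (y + (∑ l : Fin r, m l : ℕ)) ^ n

/-- `T_{n,i,q}^{(h,r)}(w) = ∑_{j_1,…,j_r=0}^{w-1} (-1)^{∑ j_l} q^{∑ (n+h-l-i) j_l}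
  [j_1+⋯+j_r]_q^i`. -/
noncomputable def Tsum (q : ℝ) (h : ℤ) (r n i w : ℕ) : ℝ :=
  ∑ j : Fin r → Fin w,
    (-1 : ℝ) ^ (∑ l : Fin r, (j l : ℕ)) *
      q ^ (∑ l : Fin r, ((n : ℝ) + h - (l.1 + 1) - i) * (j l : ℕ)) *
      qNum q (∑ l : Fin r, (j l : ℕ) : ℕ) ^ i

/-!
Both sides are `2^r` times one absolutely convergent series. Index the `q^u`-Euler series by
`m : Fin r → ℕ` and `T_{q^v}(u)` by `j : Fin r → Fin u`, and put `N_l = u m_l + v j_l`. Since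
`[uvx + ∑ N_l]_q = [v]_q [∑ j_l]_{q^v} + q^{v ∑ j_l} [u]_q [vx + ∑ m_l]_{q^u}`, the binomial theorem
turns the left side into `2^r ∑_{m, j} (-1)^{∑ N_l} q^{∑ (h-l) N_l} [uvx + ∑ N_l]_q^n`, the signs
matching because `u` and `v` are odd. This summand depends on `N` only, and `(m, j) ↦ N` has the
same fibres as its counterpart with `u` and `v` exchanged, so the series is symmetric in `u, v`.
-/

open Finset

section qNum

variable {q : ℝ}

theorem qNum_add (hq : 0 < q) (a b : ℝ) : qNum q (a + b) = qNum q b + q ^ b * qNum q a := by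
  rw [qNum, qNum, qNum, Real.rpow_add hq]
  ring

theorem qNum_natCast_mul_qNum_pow (hq0 : 0 < q) (hq1 : q < 1) {u : ℕ} (hu : 0 < u) (z : ℝ) :
    qNum q u * qNum (q ^ u) z = qNum q (u * z) := by
  have hq : 1 - q ≠ 0 := by linarith
  have hqu : 1 - q ^ u ≠ 0 := (sub_pos.2 (pow_lt_one₀ hq0.le hq1 hu.ne')).ne'
  rw [qNum, qNum, qNum, Real.rpow_natCast, Real.rpow_natCast_mul hq0.le]
  field_simp

theorem abs_qNum_add_natCast_le (hq0 : 0 < q) (hq1 : q < 1) (y : ℝ) (N : ℕ) :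
    |qNum q (y + N)| ≤ (1 + q ^ y) / (1 - q) := by
  have hq : 0 < 1 - q := by linarith
  have hpos : 0 < q ^ (y + N) := Real.rpow_pos_of_pos hq0 _
  have hle : q ^ (y + N) ≤ q ^ y :=
    Real.rpow_le_rpow_of_exponent_ge hq0 hq1.le (le_add_of_nonneg_right N.cast_nonneg)
  rw [qNum, abs_div, abs_of_pos hq, div_le_div_iff_of_pos_right hq, abs_le]
  constructor <;> linarith

end qNum

theorem summable_pow_sum {q : ℝ} (hq0 : 0 ≤ q) (hq1 : q < 1) :
    ∀ r : ℕ, Summable fun m : Fin r → ℕ => q ^ ∑ l, m l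
  | 0 => Summable.of_finite
  | r + 1 => by
    have := ((summable_geometric_of_lt_one hq0 hq1).mul_of_nonneg (summable_pow_sum hq0 hq1 r)
      (fun _ => pow_nonneg hq0 _) fun _ => pow_nonneg hq0 _).comp_injective
      (Fin.consEquiv fun _ => ℕ).symm.injective
    refine this.congr fun m => ?_
    simp [Fin.consEquiv, Fin.sum_univ_succ, pow_add, Fin.tail]

theorem summable_prod_of_finite_right {α β : Type*} [Finite β] {f : α × β → ℝ}
    (hf : ∀ b, Summable fun a => f (a, b)) : Summable f := by
  have := Fintype.ofFinite β
  refine summable_abs_iff.1 ((summable_prod_of_nonneg fun _ => abs_nonneg _).2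
    ⟨fun _ => Summable.of_finite, ?_⟩)
  simpa only [tsum_fintype] using summable_sum fun b _ => (hf b).abs

theorem tsum_prod_sum_mul {κ α β : Type*} [Fintype β] (s : Finset κ) (f : κ → α → ℝ)
    (g : κ → β → ℝ) (hf : ∀ i ∈ s, Summable (f i)) :
    ∑' p : α × β, ∑ i ∈ s, f i p.1 * g i p.2 = ∑ i ∈ s, (∑' a, f i a) * ∑ b, g i b := by
  have hfib (b : β) : Summable fun a => ∑ i ∈ s, f i a * g i b :=
    summable_sum fun i hi => (hf i hi).mul_right (g i b)
  rw [(summable_prod_of_finite_right (f := fun p : α × β => ∑ i ∈ s, f i p.1 * g i p.2)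
    hfib).tsum_prod' fun _ => Summable.of_finite]
  simp_rw [tsum_fintype, Finset.sum_comm (s := Finset.univ), ← Finset.mul_sum]
  rw [Summable.tsum_finsetSum fun i hi => (hf i hi).mul_right _]
  simp_rw [tsum_mul_right]

noncomputable def qEulerTerm (q : ℝ) (h : ℤ) (r n : ℕ) (y : ℝ) (m : Fin r → ℕ) : ℝ :=
  q ^ (∑ l : Fin r, ((h : ℝ) - (l.1 + 1)) * (m l : ℝ)) *
    (-1 : ℝ) ^ (∑ l : Fin r, m l) * qNum q (y + (∑ l : Fin r, m l : ℕ)) ^ n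

theorem qEuler_eq_tsum (q : ℝ) (h : ℤ) (r n : ℕ) (y : ℝ) :
    qEuler q h r n y = 2 ^ r * ∑' m, qEulerTerm q h r n y m := rfl

theorem summable_qEulerTerm {q : ℝ} (hq0 : 0 < q) (hq1 : q < 1) {h : ℤ} {r : ℕ}
    (hh : (r : ℤ) < h) (n : ℕ) (y : ℝ) : Summable (qEulerTerm q h r n y) := by
  refine Summable.of_norm_bounded
    ((summable_pow_sum hq0.le hq1 r).mul_left (((1 + q ^ y) / (1 - q)) ^ n)) fun m => ?_
  have hexp : ((∑ l, m l : ℕ) : ℝ) ≤ ∑ l : Fin r, ((h : ℝ) - (l.1 + 1)) * (m l : ℝ) := by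
    push_cast
    refine Finset.sum_le_sum fun l _ => le_mul_of_one_le_left (Nat.cast_nonneg _) ?_
    have : (l.1 : ℤ) + 2 ≤ h := by omega
    have : (l.1 : ℝ) + 2 ≤ h := by exact_mod_cast this
    linarith
  have hpow : q ^ (∑ l : Fin r, ((h : ℝ) - (l.1 + 1)) * (m l : ℝ)) ≤ q ^ ∑ l, m l := by
    rw [← Real.rpow_natCast]
    exact Real.rpow_le_rpow_of_exponent_ge hq0 hq1.le hexp
  rw [qEulerTerm, Real.norm_eq_abs, abs_mul, abs_mul, abs_pow, abs_pow, abs_neg, abs_one, one_pow,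
    mul_one, abs_of_pos (Real.rpow_pos_of_pos hq0 _), mul_comm]
  have hK := abs_qNum_add_natCast_le hq0 hq1 y (∑ l, m l)
  exact mul_le_mul (pow_le_pow_left₀ (abs_nonneg _) hK n) hpow
    (Real.rpow_pos_of_pos hq0 _).le (pow_nonneg ((abs_nonneg _).trans hK) n)

noncomputable def TsumTerm (q : ℝ) (h : ℤ) (r n i : ℕ) {w : ℕ} (j : Fin r → Fin w) : ℝ :=
  (-1 : ℝ) ^ (∑ l : Fin r, (j l : ℕ)) *
    q ^ (∑ l : Fin r, ((n : ℝ) + h - (l.1 + 1) - i) * (j l : ℕ)) *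
    qNum q (∑ l : Fin r, (j l : ℕ) : ℕ) ^ i

theorem Tsum_eq_sum (q : ℝ) (h : ℤ) (r n i w : ℕ) :
    Tsum q h r n i w = ∑ j : Fin r → Fin w, TsumTerm q h r n i j := rfl

def combineIndex {ι : Type*} (u v : ℕ) (p : (ι → ℕ) × (ι → Fin u)) : ι → ℕ :=
  fun l => u * p.1 l + v * p.2 l

theorem qEulerTerm_combineIndex {q : ℝ} (hq0 : 0 < q) (hq1 : q < 1) {u v : ℕ} (hu : Odd u)
    (hv : Odd v) (h : ℤ) (r n : ℕ) (x : ℝ) (p : (Fin r → ℕ) × (Fin r → Fin u)) :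
    qEulerTerm q h r n (u * v * x) (combineIndex u v p) =
      ∑ i ∈ range (n + 1), n.choose i * qNum q v ^ i * qNum q u ^ (n - i) *
        qEulerTerm (q ^ u) h r (n - i) (v * x) p.1 * TsumTerm (q ^ v) h r n i p.2 := by
  obtain ⟨m, j⟩ := p
  set M := ∑ l, m l
  set J := ∑ l, (j l : ℕ)
  set A := ∑ l : Fin r, ((h : ℝ) - (l.1 + 1)) * (m l : ℝ)
  set B := ∑ l : Fin r, ((h : ℝ) - (l.1 + 1)) * (j l : ℕ)
  have hsum : ∑ l, combineIndex u v (m, j) l = u * M + v * J := by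
    simp only [combineIndex, Finset.sum_add_distrib, ← Finset.mul_sum, M, J]
  have hsign : (-1 : ℝ) ^ (u * M + v * J) = (-1) ^ M * (-1) ^ J := by
    rw [pow_add, pow_mul, pow_mul, hu.neg_one_pow, hv.neg_one_pow]
  have hpow : q ^ (∑ l : Fin r, ((h : ℝ) - (l.1 + 1)) * (combineIndex u v (m, j) l : ℝ)) =
      (q ^ u) ^ A * (q ^ v) ^ B := by
    have : ∑ l : Fin r, ((h : ℝ) - (l.1 + 1)) * (combineIndex u v (m, j) l : ℝ) =
        u * A + v * B := by
      simp only [combineIndex, A, B, Finset.mul_sum, ← Finset.sum_add_distrib]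
      push_cast
      exact Finset.sum_congr rfl fun l _ => by ring
    rw [this, Real.rpow_add hq0, Real.rpow_natCast_mul hq0.le, Real.rpow_natCast_mul hq0.le]
  have hnum : qNum q (u * v * x + ((u * M + v * J : ℕ) : ℝ)) =
      qNum q v * qNum (q ^ v) J + (q ^ v) ^ J * (qNum q u * qNum (q ^ u) (v * x + M)) := by
    have : (u : ℝ) * v * x + ((u * M + v * J : ℕ) : ℝ) = u * (v * x + M) + v * J := by
      push_cast; ring
    rw [this, qNum_add hq0, Real.rpow_natCast_mul hq0.le, Real.rpow_natCast,
      qNum_natCast_mul_qNum_pow hq0 hq1 hu.pos, qNum_natCast_mul_qNum_pow hq0 hq1 hv.pos]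
  have hT (i : ℕ) (hi : i ≤ n) :
      (q ^ v) ^ (∑ l : Fin r, ((n : ℝ) + h - (l.1 + 1) - i) * (j l : ℕ)) =
        (q ^ v) ^ B * ((q ^ v) ^ J) ^ (n - i) := by
    have : ∑ l : Fin r, ((n : ℝ) + h - (l.1 + 1) - i) * (j l : ℕ) = B + ((n - i : ℕ) * J : ℝ) := by
      simp only [B, J, Nat.cast_sub hi, Nat.cast_sum, Finset.mul_sum, ← Finset.sum_add_distrib]
      exact Finset.sum_congr rfl fun l _ => by ring
    rw [this, Real.rpow_add (pow_pos hq0 v), Real.rpow_natCast_mul (pow_pos hq0 v).le,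
      Real.rpow_natCast, pow_right_comm]
  rw [qEulerTerm, hsum, hsign, hpow, hnum, add_pow, Finset.mul_sum]
  refine Finset.sum_congr rfl fun i hi => ?_
  rw [qEulerTerm, TsumTerm, hT i (Nat.lt_succ_iff.1 (Finset.mem_range.1 hi))]
  ring

theorem sum_choose_mul_qEuler_mul_Tsum {q : ℝ} (hq0 : 0 < q) (hq1 : q < 1) {h : ℤ} {r : ℕ}
    (hh : (r : ℤ) < h) (n : ℕ) {u v : ℕ} (hu : Odd u) (hv : Odd v) (x : ℝ) :
    ∑ i ∈ range (n + 1), n.choose i * qNum q v ^ i * qNum q u ^ (n - i) *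
        qEuler (q ^ u) h r (n - i) (v * x) * Tsum (q ^ v) h r n i u =
      2 ^ r * ∑' p, qEulerTerm q h r n (u * v * x) (combineIndex u v p) := by
  have hsummable (i : ℕ) (_ : i ∈ range (n + 1)) : Summable fun m =>
      n.choose i * qNum q v ^ i * qNum q u ^ (n - i) * qEulerTerm (q ^ u) h r (n - i) (v * x) m :=
    (summable_qEulerTerm (pow_pos hq0 u) (pow_lt_one₀ hq0.le hq1 hu.pos.ne') hh _ _).mul_left _
  rw [tsum_congr (qEulerTerm_combineIndex hq0 hq1 hu hv h r n x),
    tsum_prod_sum_mul _ _ (fun i j => TsumTerm (q ^ v) h r n i j) hsummable, Finset.mul_sum]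
  refine Finset.sum_congr rfl fun i _ => ?_
  rw [qEuler_eq_tsum, Tsum_eq_sum, tsum_mul_left]
  ring

/-- `(v a + b, j) ↦ (u a + j, b)`, which preserves `u * m + v * j`. -/
def Nat.divModSwapEquiv (u v : ℕ) [NeZero u] [NeZero v] : ℕ × Fin u ≃ ℕ × Fin v :=
  ((Nat.divModEquiv v).prodCongr (Equiv.refl _)).trans <|
    (Equiv.prodAssoc _ _ _).trans <|
      ((Equiv.refl _).prodCongr (Equiv.prodComm _ _)).trans <|
      (Equiv.prodAssoc _ _ _).symm.trans ((Nat.divModEquiv u).symm.prodCongr (Equiv.refl _))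

theorem Nat.divModSwapEquiv_spec (u v : ℕ) [NeZero u] [NeZero v] (p : ℕ × Fin u) :
    v * (divModSwapEquiv u v p).1 + u * (divModSwapEquiv u v p).2 = u * p.1 + v * p.2 := by
  obtain ⟨m, j⟩ := p
  simp only [divModSwapEquiv, Equiv.trans_apply, Equiv.prodCongr_apply, Prod.map,
    Equiv.prodAssoc_apply, Equiv.prodAssoc_symm_apply, Equiv.prodComm_apply, Equiv.refl_apply,
    Prod.swap, Nat.divModEquiv_apply, Nat.divModEquiv_symm_apply, Fin.val_ofNat]
  conv_rhs => rw [← Nat.div_add_mod m v]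
  ring

theorem tsum_comp_combineIndex_comm {ι α : Type*} [AddCommMonoid α] [TopologicalSpace α]
    (u v : ℕ) [NeZero u] [NeZero v] (f : (ι → ℕ) → α) :
    ∑' p, f (combineIndex u v p) = ∑' p, f (combineIndex v u p) := by
  let e : (ι → ℕ) × (ι → Fin u) ≃ (ι → ℕ) × (ι → Fin v) :=
    (Equiv.arrowProdEquivProdArrow _ _ _).symm.trans <|
      (Equiv.piCongrRight fun _ => Nat.divModSwapEquiv u v).trans
        (Equiv.arrowProdEquivProdArrow _ _ _)
  rw [← e.tsum_eq]
  refine tsum_congr fun p => congrArg f (funext fun l => ?_)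
  exact (Nat.divModSwapEquiv_spec u v (p.1 l, p.2 l)).symm

theorem qEuler_second_symmetry_general (q x : ℝ) (hq0 : 0 < q) (hq1 : q < 1)
    (r : ℕ) (h : ℤ) (hh : (r : ℤ) < h) (n : ℕ)
    (w₁ w₂ : ℕ) (hw₁ : Odd w₁) (hw₂ : Odd w₂) :
    ∑ i ∈ Finset.range (n + 1),
        (n.choose i : ℝ) * qNum q w₂ ^ i * qNum q w₁ ^ (n - i) *
          qEuler (q ^ w₁) h r (n - i) ((w₂ : ℝ) * x) * Tsum (q ^ w₂) h r n i w₁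
      = ∑ i ∈ Finset.range (n + 1),
          (n.choose i : ℝ) * qNum q w₁ ^ i * qNum q w₂ ^ (n - i) *
            qEuler (q ^ w₂) h r (n - i) ((w₁ : ℝ) * x) * Tsum (q ^ w₁) h r n i w₂ := by
  have := NeZero.of_pos hw₁.pos
  have := NeZero.of_pos hw₂.pos
  rw [sum_choose_mul_qEuler_mul_Tsum hq0 hq1 hh n hw₁ hw₂,
    sum_choose_mul_qEuler_mul_Tsum hq0 hq1 hh n hw₂ hw₁, mul_comm (w₂ : ℝ) w₁,
    tsum_comp_combineIndex_comm]

theorem qEuler_second_symmetry (q x : ℝ) (hq0 : 0 < q) (hq1 : q < 1)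
    (r : ℕ) (hr : 1 ≤ r) (h : ℤ) (hh : (r : ℤ) < h) (n : ℕ)
    (w₁ w₂ : ℕ) (hw₁ : Odd w₁) (hw₂ : Odd w₂) (hw₁' : 0 < w₁) (hw₂' : 0 < w₂) :
    ∑ i ∈ Finset.range (n + 1),
        (n.choose i : ℝ) * qNum q w₂ ^ i * qNum q w₁ ^ (n - i) *
          qEuler (q ^ w₁) h r (n - i) ((w₂ : ℝ) * x) * Tsum (q ^ w₂) h r n i w₁
      = ∑ i ∈ Finset.range (n + 1),
          (n.choose i : ℝ) * qNum q w₁ ^ i * qNum q w₂ ^ (n - i) *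
            qEuler (q ^ w₂) h r (n - i) ((w₁ : ℝ) * x) * Tsum (q ^ w₁) h r n i w₂ :=
  qEuler_second_symmetry_general q x hq0 hq1 r h hh n w₁ w₂ hw₁ hw₂
end
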